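/- Coassociativity law C for the ALC-comonad: for homomorphisms f : D_k(I,d) → (J,e) and g : D_k(J,e) → (K,k₀), we have (g ∘ f*)* = g* ∘ f*. -/

import Mathlib

/-- An interpretation over concept names `C` and role names `R` with domain `D`. -/
structure Interp (C R D : Type) where
  concept : C → Set D
  role : R → Set (D × D)

variable {C R DI DJ DK : Type}

/-- `ValidFrom I a l`: the alternating sequence of role steps `l` is a valid path in `I`
starting at `a` (consecutive elements are connected by the corresponding role). -/
def ValidFrom (I : Interp C R DI) : DI → List (R × DI) → Prop
  | _, [] => True
  | a, p :: rest => (a, p.2) ∈ I.role p.1 ∧ ValidFrom I p.2 rest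

/-- Last domain element of the path `d · l`. -/
def pathLast (d : DI) (l : List (R × DI)) : DI := (l.map Prod.snd).getLastD d

/-- An element of the depth-`k` unravelling of `(I, d)`:
an alternating sequence `[d, r₁, a₁, …, r_j, a_j]`, encoded by its list of steps. -/
structure UnravelElem (I : Interp C R DI) (d : DI) (k : ℕ) where
  steps : List (R × DI)
  len_le : steps.length ≤ k
  valid : ValidFrom I d steps

/-- The depth-`k` unravelling `D_k(I, d)` as an interpretation. -/
def unravel (I : Interp C R DI) (d : DI) (k : ℕ) : Interp C R (UnravelElem I d k) where
  concept c := {s | pathLast d s.steps ∈ I.concept c}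
  role r := {p | ∃ b, p.2.steps = p.1.steps ++ [(r, b)]}

/-- The distinguished element `[d]` of the unravelling. -/
def uroot (I : Interp C R DI) (d : DI) (k : ℕ) : UnravelElem I d k :=
  ⟨[], by simp, trivial⟩

/-- The counit `ε`, sending a sequence to its last element. -/
def counit (I : Interp C R DI) (d : DI) (k : ℕ) (s : UnravelElem I d k) : DI :=
  pathLast d s.steps

/-- Homomorphism of pointed interpretations. -/
structure IsHom (I : Interp C R DI) (dI : DI) (J : Interp C R DJ) (dJ : DJ)
    (h : DI → DJ) : Prop where
  point : h dI = dJ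
  concept : ∀ c x, x ∈ I.concept c → h x ∈ J.concept c
  role : ∀ r x y, (x, y) ∈ I.role r → (h x, h y) ∈ J.role r

theorem pathLast_concat (d : DI) (l : List (R × DI)) (p : R × DI) :
    pathLast d (l ++ [p]) = p.2 := by
  simp [pathLast]

theorem pathLast_cons (d : DI) (p : R × DI) (l : List (R × DI)) :
    pathLast d (p :: l) = pathLast p.2 l := by
  cases l with
  | nil => rfl
  | cons q m => simp only [pathLast, List.map_cons, List.getLastD_cons]

theorem validFrom_append (I : Interp C R DI) :
    ∀ (a : DI) (l₁ l₂ : List (R × DI)),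
      ValidFrom I a (l₁ ++ l₂) ↔ ValidFrom I a l₁ ∧ ValidFrom I (pathLast a l₁) l₂
  | a, [], l₂ => by simp [ValidFrom, pathLast]
  | a, p :: rest, l₂ => by
      simp [ValidFrom, validFrom_append I p.2 rest l₂, pathLast_cons, and_assoc]

/-- Auxiliary for the Kleisli coextension: process the steps from the left,
carrying the already-consumed prefix. -/
def coextFrom (F : List (R × DI) → DJ) : List (R × DI) → List (R × DI) → List (R × DJ)
  | _, [] => []
  | pre, p :: rest => (p.1, F (pre ++ [p])) :: coextFrom F (pre ++ [p]) rest

/-- Raw Kleisli coextension on step lists: satisfies `coextList F [] = []` and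
`coextList F (s ++ [(r,d')]) = coextList F s ++ [(r, F (s ++ [(r,d')]))]`. -/
def coextList (F : List (R × DI) → DJ) (l : List (R × DI)) : List (R × DJ) :=
  coextFrom F [] l

open Classical in
/-- Lift a function on unravelling elements to all step lists (junk value elsewhere). -/
noncomputable def liftF (I : Interp C R DI) (dI : DI) (k : ℕ)
    (f : UnravelElem I dI k → DJ) (default : DJ) (l : List (R × DI)) : DJ :=
  if h : l.length ≤ k ∧ ValidFrom I dI l then f ⟨l, h.1, h.2⟩ else default

theorem coextFrom_length (F : List (R × DI) → DJ) :
    ∀ pre l, (coextFrom F pre l).length = l.length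
  | _, [] => rfl
  | pre, p :: rest => by
      simp [coextFrom, coextFrom_length F (pre ++ [p]) rest]

theorem coextFrom_concat (F : List (R × DI) → DJ) :
    ∀ pre l x, coextFrom F pre (l ++ [x]) =
      coextFrom F pre l ++ [(x.1, F (pre ++ l ++ [x]))]
  | pre, [], x => by simp [coextFrom]
  | pre, p :: rest, x => by
      simp [coextFrom, coextFrom_concat F (pre ++ [p]) rest x]

theorem coext_spec {I : Interp C R DI} {dI : DI} {k : ℕ} {J : Interp C R DJ} {dJ : DJ}
    (f : UnravelElem I dI k → DJ)
    (hf : IsHom (unravel I dI k) (uroot I dI k) J dJ f) :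
    ∀ (l : List (R × DI)) (hl : l.length ≤ k) (hv : ValidFrom I dI l),
      ValidFrom J dJ (coextList (liftF I dI k f dJ) l) ∧
      pathLast dJ (coextList (liftF I dI k f dJ) l) = f ⟨l, hl, hv⟩ := by
  intro l
  induction l using List.reverseRecOn with
  | nil =>
      intro hl hv
      refine ⟨trivial, ?_⟩
      first
        | simpa [coextList, coextFrom, pathLast, uroot] using hf.point.symm
        | exact hf.point.symm
  | append_singleton m p ih =>
      intro hl hv
      have hm : m.length ≤ k := by
        have h' := hl
        simp only [List.length_append, List.length_singleton] at h'
        omega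
      have hvm : ValidFrom I dI m := ((validFrom_append I dI m [p]).mp hv).1
      obtain ⟨ihv, ihl⟩ := ih hm hvm
      have hedge : ((⟨m, hm, hvm⟩ : UnravelElem I dI k), (⟨m ++ [p], hl, hv⟩ : UnravelElem I dI k))
          ∈ (unravel I dI k).role p.1 := ⟨p.2, by simp⟩
      have hr : (f ⟨m, hm, hvm⟩, f ⟨m ++ [p], hl, hv⟩) ∈ J.role p.1 :=
        hf.role p.1 _ _ hedge
      have hF : liftF I dI k f dJ (m ++ [p]) = f ⟨m ++ [p], hl, hv⟩ := by
        unfold liftF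
        rw [dif_pos (⟨hl, hv⟩ : (m ++ [p]).length ≤ k ∧ ValidFrom I dI (m ++ [p]))]
      have hcoe : coextList (liftF I dI k f dJ) (m ++ [p]) =
          coextList (liftF I dI k f dJ) m ++ [(p.1, f ⟨m ++ [p], hl, hv⟩)] := by
        unfold coextList
        rw [coextFrom_concat]
        simp only [List.nil_append, hF]
      rw [hcoe]
      constructor
      · rw [validFrom_append]
        exact ⟨ihv, by rw [ihl]; exact ⟨hr, trivial⟩⟩
      · rw [pathLast_concat]

/-- The Kleisli coextension `f* : D_k(I,d) → D_k(J,e)` of a homomorphism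
`f : D_k(I,d) → (J,e)`. -/
noncomputable def coext {I : Interp C R DI} {dI : DI} {k : ℕ} {J : Interp C R DJ} {dJ : DJ}
    (f : UnravelElem I dI k → DJ)
    (hf : IsHom (unravel I dI k) (uroot I dI k) J dJ f)
    (s : UnravelElem I dI k) : UnravelElem J dJ k :=
  ⟨coextList (liftF I dI k f dJ) s.steps,
   by simpa [coextList, coextFrom_length] using s.len_le,
   (coext_spec f hf s.steps s.len_le s.valid).1⟩

theorem UnravelElem.ext' {I : Interp C R DI} {d : DI} {k : ℕ}
    {s t : UnravelElem I d k} (h : s.steps = t.steps) : s = t := by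
  cases s; cases t; simp_all

theorem coextList_concat (F : List (R × DI) → DJ) (l : List (R × DI)) (x : R × DI) :
    coextList F (l ++ [x]) = coextList F l ++ [(x.1, F (l ++ [x]))] := by
  unfold coextList; rw [coextFrom_concat]; simp

theorem coextList_coassoc {I : Interp C R DI} {dI : DI} {k : ℕ}
    {J : Interp C R DJ} {dJ : DJ} {dK : DK}
    (f : UnravelElem I dI k → DJ) (g : UnravelElem J dJ k → DK)
    (hf : IsHom (unravel I dI k) (uroot I dI k) J dJ f) :
    ∀ (l : List (R × DI)), l.length ≤ k → ValidFrom I dI l →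
      coextList (liftF I dI k (g ∘ coext f hf) dK) l =
      coextList (liftF J dJ k g dK) (coextList (liftF I dI k f dJ) l) := by
  intro l
  induction l using List.reverseRecOn with
  | nil => intro _ _; rfl
  | append_singleton m p ih =>
      intro hl hv
      have hm : m.length ≤ k := by
        have h' := hl
        simp only [List.length_append, List.length_singleton] at h'
        omega
      have hvm : ValidFrom I dI m := ((validFrom_append I dI m [p]).mp hv).1
      have hF : liftF I dI k f dJ (m ++ [p]) = f ⟨m ++ [p], hl, hv⟩ := by
        unfold liftF
        rw [dif_pos (⟨hl, hv⟩ : (m ++ [p]).length ≤ k ∧ ValidFrom I dI (m ++ [p]))]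
      have hcoe : coextList (liftF I dI k f dJ) (m ++ [p]) =
          coextList (liftF I dI k f dJ) m ++ [(p.1, f ⟨m ++ [p], hl, hv⟩)] := by
        unfold coextList
        rw [coextFrom_concat]
        simp only [List.nil_append, hF]
      have hlen2 : (coextList (liftF I dI k f dJ) (m ++ [p])).length ≤ k := by
        simpa [coextList, coextFrom_length] using hl
      have hv2 : ValidFrom J dJ (coextList (liftF I dI k f dJ) (m ++ [p])) :=
        (coext_spec f hf (m ++ [p]) hl hv).1
      have hG : liftF J dJ k g dK (coextList (liftF I dI k f dJ) (m ++ [p])) =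
          g ⟨coextList (liftF I dI k f dJ) (m ++ [p]), hlen2, hv2⟩ := by
        unfold liftF
        rw [dif_pos ⟨hlen2, hv2⟩]
      have hGF : liftF I dI k (g ∘ coext f hf) dK (m ++ [p]) =
          g ⟨coextList (liftF I dI k f dJ) (m ++ [p]), hlen2, hv2⟩ := by
        unfold liftF
        rw [dif_pos (⟨hl, hv⟩ : (m ++ [p]).length ≤ k ∧ ValidFrom I dI (m ++ [p]))]
        rfl
      have hG' : liftF J dJ k g dK
            (coextList (liftF I dI k f dJ) m ++ [(p.1, f ⟨m ++ [p], hl, hv⟩)]) =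
          g ⟨coextList (liftF I dI k f dJ) (m ++ [p]), hlen2, hv2⟩ := by
        rw [← hcoe]; exact hG
      calc coextList (liftF I dI k (g ∘ coext f hf) dK) (m ++ [p])
          = coextList (liftF I dI k (g ∘ coext f hf) dK) m ++
              [(p.1, liftF I dI k (g ∘ coext f hf) dK (m ++ [p]))] := by
            unfold coextList; rw [coextFrom_concat]; simp
        _ = coextList (liftF J dJ k g dK) (coextList (liftF I dI k f dJ) m) ++
              [(p.1, g ⟨coextList (liftF I dI k f dJ) (m ++ [p]), hlen2, hv2⟩)] := by
            rw [ih hm hvm, hGF]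
        _ = coextList (liftF J dJ k g dK) (coextList (liftF I dI k f dJ) (m ++ [p])) := by
            conv_rhs => rw [hcoe, coextList_concat]
            rw [hG']

/-- coassociativity law C: `(g ∘ f*)* = g* ∘ f*`. -/
theorem coext_coassoc (k : ℕ) {I : Interp C R DI} {dI : DI}
    {J : Interp C R DJ} {dJ : DJ} {K : Interp C R DK} {dK : DK}
    (f : UnravelElem I dI k → DJ) (g : UnravelElem J dJ k → DK)
    (hf : IsHom (unravel I dI k) (uroot I dI k) J dJ f)
    (hg : IsHom (unravel J dJ k) (uroot J dJ k) K dK g)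
    (hgf : IsHom (unravel I dI k) (uroot I dI k) K dK (g ∘ coext f hf)) :
    coext (g ∘ coext f hf) hgf = coext g hg ∘ coext f hf := by
  funext s
  apply UnravelElem.ext'
  exact coextList_coassoc (dK := dK) f g hf s.steps s.len_le s.valid
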